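/- arXiv:1910.10139 — 4 statements merged into one kernel-verified Lean document; each statement's English description precedes it below -/
import Mathlib

section
/- Let α, β be real numbers with 0 < α ≤ 1 and 0 < β < 1, and let A be the 4×4 real matrix with rows (3α(2−3β), 9αβ, 0, 0), ((2α+1)(1−β), (2α+1)(1−β), 2(2α+1)β, 0), (0, 2(α+2)(1−β), (α+2)β, (α+2)β), and (0, 0, 9(1−β), 3(3β−1)). Then every complex eigenvalue μ of A (i.e., of A viewed as a matrix over ℂ) satisfies Re(μ) ≤ λ, where λ := (8α + 7β(1−α) + 1 + √(D(α,β)))/2 and D(α,β) := 16α² − 8α + 1 + α²β² − 2αβ² + β² + 14β + 2αβ − 16α²β. -/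
/-!
The characteristic polynomial of `A` factors as `μ (μ + 3(1 - β + αβ)) (μ² - sμ + p)` with
`s = 8α + 7β(1-α) + 1` and `s² - 4p = D(α,β)`. A root of `μ² - sμ + p` is either real, and then
at most `(s + √(s² - 4p))/2`, or non-real with real part `s/2`; the two linear factors have roots
`0` and `-3(1 - β + αβ)`, both below `s/2` for `0 < α ≤ 1`, `0 < β`.
-/

theorem Complex.re_le_of_sq_sub_mul_add_eq_zero {s p : ℝ} {z : ℂ}
    (h : z ^ 2 - s * z + p = 0) : z.re ≤ (s + √(s ^ 2 - 4 * p)) / 2 := by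
  have hre : z.re ^ 2 - z.im ^ 2 - s * z.re + p = 0 := by
    simpa [sq] using congrArg Complex.re h
  have him : z.im * (2 * z.re - s) = 0 := by
    have := congrArg Complex.im h
    simp only [sq, Complex.sub_im, Complex.add_im, Complex.mul_im, Complex.ofReal_re,
      Complex.ofReal_im, Complex.zero_im] at this
    linarith
  rcases mul_eq_zero.1 him with hreal | hcentre
  · have hdisc : (2 * z.re - s) ^ 2 ≤ s ^ 2 - 4 * p := by
      rw [hreal] at hre
      nlinarith
    linarith [(le_abs_self _).trans (Real.abs_le_sqrt hdisc)]
  · linarith [Real.sqrt_nonneg (s ^ 2 - 4 * p)]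

theorem det_smul_one_sub_urn_generator (α β : ℝ) (μ : ℂ) :
    Matrix.det (μ • (1 : Matrix (Fin 4) (Fin 4) ℂ) -
      (!![3*α*(2-3*β), 9*α*β, 0, 0;
          (2*α+1)*(1-β), (2*α+1)*(1-β), 2*(2*α+1)*β, 0;
          0, 2*(α+2)*(1-β), (α+2)*β, (α+2)*β;
          0, 0, 9*(1-β), 3*(3*β-1)] : Matrix (Fin 4) (Fin 4) ℝ).map (fun x : ℝ => (x : ℂ))) =
      μ * (μ + 3 * (1 - β + α * β)) *
        (μ ^ 2 - (8*α + 7*β*(1-α) + 1 : ℝ) * μ +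
          (6*α + 12*α^2 + 24*α*β - 24*α^2*β + 12*β^2 - 24*α*β^2 + 12*α^2*β^2 : ℝ)) := by
  rw [Matrix.det_succ_row_zero]
  simp [Fin.sum_univ_succ, Matrix.det_fin_three, Fin.succAbove, Matrix.one_apply,
    Matrix.submatrix]
  ring

theorem lambda_is_max_real_part_eigenvalue_of_A_general (α β : ℝ) (hα0 : 0 < α)
    (hα1 : α ≤ 1) (hβ0 : 0 < β) :
    let A : Matrix (Fin 4) (Fin 4) ℝ :=
      !![3*α*(2-3*β), 9*α*β, 0, 0;
         (2*α+1)*(1-β), (2*α+1)*(1-β), 2*(2*α+1)*β, 0;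
         0, 2*(α+2)*(1-β), (α+2)*β, (α+2)*β;
         0, 0, 9*(1-β), 3*(3*β-1)]
    let lam : ℝ := (8*α + 7*β*(1-α) + 1 +
      Real.sqrt (16*α^2 - 8*α + 1 + α^2*β^2 - 2*α*β^2 + β^2 + 14*β + 2*α*β
        - 16*α^2*β)) / 2
    ∀ μ : ℂ,
      Matrix.det (μ • (1 : Matrix (Fin 4) (Fin 4) ℂ)
          - A.map (fun x : ℝ => (x : ℂ))) = 0 →
      μ.re ≤ lam := by
  intro A lam μ h
  set s : ℝ := 8*α + 7*β*(1-α) + 1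
  set p : ℝ := 6*α + 12*α^2 + 24*α*β - 24*α^2*β + 12*β^2 - 24*α*β^2 + 12*α^2*β^2
  have hlam : lam = (s + √(s ^ 2 - 4 * p)) / 2 := by
    simp only [lam, s, p]
    ring_nf
  have hs_le : s / 2 ≤ lam := by
    rw [hlam]
    linarith [Real.sqrt_nonneg (s ^ 2 - 4 * p)]
  have hβα : 0 ≤ β * (1 - α) := mul_nonneg hβ0.le (by linarith)
  have hfactor := (det_smul_one_sub_urn_generator α β μ).symm.trans h
  rcases mul_eq_zero.1 hfactor with hlin | hquad
  · rcases mul_eq_zero.1 hlin with hzero | hneg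
    · rw [hzero, Complex.zero_re]
      linarith
    · have hre : μ.re = -3 * (1 - β + α * β) := by
        simpa using congrArg Complex.re (eq_neg_of_add_eq_zero_left hneg)
      linarith
  · rw [hlam]
    exact Complex.re_le_of_sq_sub_mul_add_eq_zero hquad

/-- Every complex eigenvalue of the generator `A` (viewed over `ℂ`) has real
part at most `λ = (8α + 7β(1−α) + 1 + √D(α,β))/2`. -/
theorem lambda_is_max_real_part_eigenvalue_of_A (α β : ℝ) (hα0 : 0 < α)
    (hα1 : α ≤ 1) (hβ0 : 0 < β) (hβ1 : β < 1) :
    let A : Matrix (Fin 4) (Fin 4) ℝ :=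
      !![3*α*(2-3*β), 9*α*β, 0, 0;
         (2*α+1)*(1-β), (2*α+1)*(1-β), 2*(2*α+1)*β, 0;
         0, 2*(α+2)*(1-β), (α+2)*β, (α+2)*β;
         0, 0, 9*(1-β), 3*(3*β-1)]
    let lam : ℝ := (8*α + 7*β*(1-α) + 1 +
      Real.sqrt (16*α^2 - 8*α + 1 + α^2*β^2 - 2*α*β^2 + β^2 + 14*β + 2*α*β
        - 16*α^2*β)) / 2
    ∀ μ : ℂ,
      Matrix.det (μ • (1 : Matrix (Fin 4) (Fin 4) ℂ)
          - A.map (fun x : ℝ => (x : ℂ))) = 0 →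
      μ.re ≤ lam :=
  lambda_is_max_real_part_eigenvalue_of_A_general α β hα0 hα1 hβ0
end

section
/- Let α, β be real numbers with 0 < α ≤ 1 and 0 < β < 1, and let A* be the 3×3 real matrix with rows ((1+2α)(1−2β), 2(1+2α)β, 0), ((2+α)(1−β), 0, (2+α)β), and (0, 6(1−β), 3(2β−1)). Then the real number λ* := 1 + 2α(1−β) + 2β is an eigenvalue of A*, i.e., det(λ*·I − A*) = 0. -/
/-!
The binomial law `((1-β)², 2β(1-β), β²)` of the number of weight-one vertices among the two
outer vertices of a face is a left eigenvector of `A*` for `λ*`. It is nonzero because its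
entries sum to `((1-β) + β)² = 1`, so `λ* • 1 - A*` has a nontrivial left kernel.
-/

open Matrix

theorem Matrix.det_smul_one_sub_eq_zero_of_vecMul_eq_smul {n R : Type*} [Fintype n]
    [DecidableEq n] [CommRing R] [IsDomain R] {M : Matrix n n R} {μ : R} {v : n → R}
    (hv : v ≠ 0) (hvM : v ᵥ* M = μ • v) : (μ • (1 : Matrix n n R) - M).det = 0 := by
  refine exists_vecMul_eq_zero_iff.mp ⟨v, hv, ?_⟩
  rw [vecMul_sub, vecMul_smul, vecMul_one, hvM, sub_self]

-- Indices `0, 1, 2` are the face types `(α,α,1), (α,1,1), (1,1,1)`.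
def starUrnGenerator (α β : ℝ) : Matrix (Fin 3) (Fin 3) ℝ :=
  !![(1+2*α)*(1-2*β), 2*(1+2*α)*β, 0;
     (2+α)*(1-β), 0, (2+α)*β;
     0, 6*(1-β), 3*(2*β-1)]

def binomialWeights (β : ℝ) : Fin 3 → ℝ :=
  ![(1-β)^2, 2*β*(1-β), β^2]

theorem sum_binomialWeights (β : ℝ) : ∑ i, binomialWeights β i = 1 := by
  simp only [binomialWeights, Fin.sum_univ_three, Matrix.cons_val_zero, Matrix.cons_val_one,
    Matrix.cons_val_two, Matrix.head_cons, Matrix.tail_cons]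
  ring

theorem binomialWeights_ne_zero (β : ℝ) : binomialWeights β ≠ 0 := by
  intro h
  simpa [h] using sum_binomialWeights β

theorem binomialWeights_vecMul_starUrnGenerator (α β : ℝ) :
    binomialWeights β ᵥ* starUrnGenerator α β =
      (1 + 2*α*(1-β) + 2*β) • binomialWeights β := by
  ext i
  fin_cases i <;>
    simp [binomialWeights, starUrnGenerator, vecMul, dotProduct, Fin.sum_univ_three] <;> ring

theorem lambda_star_is_eigenvalue_of_Astar_general (α β : ℝ) :
    let Astar : Matrix (Fin 3) (Fin 3) ℝ :=
      !![(1+2*α)*(1-2*β), 2*(1+2*α)*β, 0;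
         (2+α)*(1-β), 0, (2+α)*β;
         0, 6*(1-β), 3*(2*β-1)]
    let lamStar : ℝ := 1 + 2*α*(1-β) + 2*β
    Matrix.det (lamStar • (1 : Matrix (Fin 3) (Fin 3) ℝ) - Astar) = 0 :=
  det_smul_one_sub_eq_zero_of_vecMul_eq_smul (binomialWeights_ne_zero β)
    (binomialWeights_vecMul_starUrnGenerator α β)

/-- The real number `λ* = 1 + 2α(1−β) + 2β` is an eigenvalue of the generator
`A*` of the generalised Pólya urn associated with the `1⋆`-process. -/
theorem lambda_star_is_eigenvalue_of_Astar (α β : ℝ) (hα0 : 0 < α)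
    (hα1 : α ≤ 1) (hβ0 : 0 < β) (hβ1 : β < 1) :
    let Astar : Matrix (Fin 3) (Fin 3) ℝ :=
      !![(1+2*α)*(1-2*β), 2*(1+2*α)*β, 0;
         (2+α)*(1-β), 0, (2+α)*β;
         0, 6*(1-β), 3*(2*β-1)]
    let lamStar : ℝ := 1 + 2*α*(1-β) + 2*β
    Matrix.det (lamStar • (1 : Matrix (Fin 3) (Fin 3) ℝ) - Astar) = 0 :=
  lambda_star_is_eigenvalue_of_Astar_general α β
end

section
/- Let α, β be real numbers with 0 < α ≤ 1 and 0 < β < 1, and let A* be the 3×3 real matrix with rows ((1+2α)(1−2β), 2(1+2α)β, 0), ((2+α)(1−β), 0, (2+α)β), and (0, 6(1−β), 3(2β−1)). Then every complex eigenvalue μ of A* (i.e., of A* viewed as a matrix over ℂ) satisfies Re(μ) ≤ λ*, where λ* := 1 + 2α(1−β) + 2β. -/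
/-!
Over any commutative ring the characteristic polynomial of `A*` factors as
`(t - λ*) · t · (t - λ* + 4 + 2α)`, so the eigenvalues of `A*` are the real numbers `λ*`, `0` and
`λ* - (4 + 2α)`. The last one lies below `λ*` as soon as `α > -2`, and `0 < λ*` because every
summand of `λ* = 1 + 2α(1 - β) + 2β` is positive when `0 < α` and `0 < β < 1`.
-/

namespace StarProcess

open Matrix

section CommRing

variable {R : Type*} [CommRing R]

def generator (a b : R) : Matrix (Fin 3) (Fin 3) R :=
  !![(1+2*a)*(1-2*b), 2*(1+2*a)*b, 0;
     (2+a)*(1-b), 0, (2+a)*b;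
     0, 6*(1-b), 3*(2*b-1)]

def lambdaStar (a b : R) : R := 1 + 2*a*(1-b) + 2*b

theorem det_smul_one_sub_generator (a b t : R) :
    (t • (1 : Matrix (Fin 3) (Fin 3) R) - generator a b).det
      = (t - lambdaStar a b) * t * (t - (lambdaStar a b - (4 + 2*a))) := by
  simp only [generator, lambdaStar, det_fin_three, Matrix.sub_apply, Matrix.smul_apply, one_apply,
    of_apply, cons_val', cons_val_zero, cons_val_one, cons_val, cons_val_fin_one, Fin.reduceEq,
    ↓reduceIte, smul_eq_mul]
  ring

theorem eq_lambdaStar_or_eq_zero_or_eq_of_det_eq_zero [IsDomain R] {a b t : R}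
    (h : (t • (1 : Matrix (Fin 3) (Fin 3) R) - generator a b).det = 0) :
    t = lambdaStar a b ∨ t = 0 ∨ t = lambdaStar a b - (4 + 2*a) := by
  rw [det_smul_one_sub_generator, mul_eq_zero, mul_eq_zero, sub_eq_zero, sub_eq_zero] at h
  tauto

end CommRing

theorem generator_map_ofReal (a b : ℝ) :
    (generator a b).map ((↑) : ℝ → ℂ) = generator (a : ℂ) (b : ℂ) := by
  ext i j
  fin_cases i <;> fin_cases j <;> simp [generator]

theorem ofReal_lambdaStar (a b : ℝ) : ((lambdaStar a b : ℝ) : ℂ) = lambdaStar (a : ℂ) (b : ℂ) := by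
  simp [lambdaStar]

theorem lambdaStar_pos {a b : ℝ} (ha : 0 < a) (hb₀ : 0 < b) (hb₁ : b < 1) : 0 < lambdaStar a b := by
  have : 0 < 2 * a * (1 - b) := by positivity
  unfold lambdaStar
  linarith

end StarProcess

open StarProcess

theorem lambda_star_is_max_real_part_eigenvalue_of_Astar_general (α β : ℝ)
    (hα0 : 0 < α) (hβ0 : 0 < β) (hβ1 : β < 1) :
    let Astar : Matrix (Fin 3) (Fin 3) ℝ :=
      !![(1+2*α)*(1-2*β), 2*(1+2*α)*β, 0;
         (2+α)*(1-β), 0, (2+α)*β;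
         0, 6*(1-β), 3*(2*β-1)]
    let lamStar : ℝ := 1 + 2*α*(1-β) + 2*β
    ∀ μ : ℂ,
      Matrix.det (μ • (1 : Matrix (Fin 3) (Fin 3) ℂ)
          - Astar.map (fun x : ℝ => (x : ℂ))) = 0 →
      μ.re ≤ lamStar := by
  intro Astar lamStar μ h
  change _ ≤ lambdaStar α β
  rw [show Astar.map _ = generator (α : ℂ) β from generator_map_ofReal α β] at h
  have hpos := lambdaStar_pos hα0 hβ0 hβ1
  rcases eq_lambdaStar_or_eq_zero_or_eq_of_det_eq_zero h with rfl | rfl | rfl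
  · rw [← ofReal_lambdaStar, Complex.ofReal_re]
  · simpa using hpos.le
  · rw [← ofReal_lambdaStar]
    simp only [Complex.sub_re, Complex.add_re, Complex.mul_re, Complex.ofReal_re,
      Complex.ofReal_im, Complex.re_ofNat, Complex.im_ofNat]
    linarith

/-- Every complex eigenvalue of the `1⋆`-process generator `A*` (viewed over
`ℂ`) has real part at most `λ* = 1 + 2α(1−β) + 2β`. -/
theorem lambda_star_is_max_real_part_eigenvalue_of_Astar (α β : ℝ)
    (hα0 : 0 < α) (hα1 : α ≤ 1) (hβ0 : 0 < β) (hβ1 : β < 1) :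
    let Astar : Matrix (Fin 3) (Fin 3) ℝ :=
      !![(1+2*α)*(1-2*β), 2*(1+2*α)*β, 0;
         (2+α)*(1-β), 0, (2+α)*β;
         0, 6*(1-β), 3*(2*β-1)]
    let lamStar : ℝ := 1 + 2*α*(1-β) + 2*β
    ∀ μ : ℂ,
      Matrix.det (μ • (1 : Matrix (Fin 3) (Fin 3) ℂ)
          - Astar.map (fun x : ℝ => (x : ℂ))) = 0 →
      μ.re ≤ lamStar :=
  lambda_star_is_max_real_part_eigenvalue_of_Astar_general α β hα0 hβ0 hβ1
end

section
/- Let α, β be real numbers with 0 < α ≤ 1 and 0 < β < 1. Define D(α,β) := 16α² − 8α + 1 + α²β² − 2αβ² + β² + 14β + 2αβ − 16α²β, λ := (8α + 7β(1−α) + 1 + √(D(α,β)))/2, and λ* := 1 + 2α(1−β) + 2β. Then λ > 0 and λ*/λ ≥ 1/2, and the inequality is strict if and only if α < 1 (with equality λ*/λ = 1/2 exactly when α = 1). -/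
/-!
With `s = 3 + β(1-α)` one has the exact identities `4λ* - 2λ = s - √D` and
`s² - D = 8(1-β)(1-α)(1+2α)`. The second factorisation is nonnegative, and vanishes
only at `α = 1`; as `s > 0`, this is the sign of `s - √D`, hence of `λ*/λ - 1/2`.
-/

namespace ApollonianGrowth

open Real

noncomputable section

def discr (α β : ℝ) : ℝ :=
  16*α^2 - 8*α + 1 + α^2*β^2 - 2*α*β^2 + β^2 + 14*β + 2*α*β - 16*α^2*β

def growthRate (α β : ℝ) : ℝ := (8*α + 7*β*(1-α) + 1 + √(discr α β)) / 2

def starGrowthRate (α β : ℝ) : ℝ := 1 + 2*α*(1-β) + 2*β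

end

theorem sq_sub_discr (α β : ℝ) :
    (3 + β*(1-α))^2 - discr α β = 8*(1-β)*(1-α)*(1+2*α) := by
  unfold discr; ring

theorem four_mul_starGrowthRate_sub_two_mul_growthRate (α β : ℝ) :
    4 * starGrowthRate α β - 2 * growthRate α β = 3 + β*(1-α) - √(discr α β) := by
  unfold starGrowthRate growthRate; ring

section

variable {α β : ℝ}

theorem growthRate_pos (hα0 : 0 ≤ α) (hα1 : α ≤ 1) (hβ0 : 0 ≤ β) : 0 < growthRate α β := by
  have := sqrt_nonneg (discr α β)
  unfold growthRate; nlinarith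

theorem sqrt_discr_le (hα0 : 0 ≤ α) (hα1 : α ≤ 1) (hβ0 : 0 ≤ β)
    (hβ1 : β ≤ 1) : √(discr α β) ≤ 3 + β*(1-α) := by
  have hs : 0 ≤ 3 + β*(1-α) := by nlinarith
  refine sqrt_le_iff.mpr ⟨hs, ?_⟩
  have : 0 ≤ 8*(1-β)*(1-α)*(1+2*α) := by
    have := mul_nonneg (sub_nonneg.mpr hβ1) (sub_nonneg.mpr hα1); positivity
  linarith [sq_sub_discr α β]

theorem sqrt_discr_lt_iff (hα0 : 0 ≤ α) (hα1 : α ≤ 1) (hβ0 : 0 ≤ β)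
    (hβ1 : β < 1) : √(discr α β) < 3 + β*(1-α) ↔ α < 1 := by
  have hs : 0 < 3 + β*(1-α) := by nlinarith
  rw [sqrt_lt' hs, ← sub_pos, sq_sub_discr]
  constructor
  · intro h
    refine hα1.lt_of_ne fun h1 => ?_
    simp [h1] at h
  · intro h
    have := mul_pos (sub_pos.mpr hβ1) (sub_pos.mpr h); positivity

theorem half_le_starGrowthRate_div (hα0 : 0 ≤ α) (hα1 : α ≤ 1) (hβ0 : 0 ≤ β)
    (hβ1 : β ≤ 1) :
    1/2 ≤ starGrowthRate α β / growthRate α β := by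
  rw [le_div_iff₀ (growthRate_pos hα0 hα1 hβ0)]
  linarith [four_mul_starGrowthRate_sub_two_mul_growthRate α β, sqrt_discr_le hα0 hα1 hβ0 hβ1]

theorem half_lt_starGrowthRate_div_iff (hα0 : 0 ≤ α) (hα1 : α ≤ 1) (hβ0 : 0 ≤ β)
    (hβ1 : β < 1) :
    1/2 < starGrowthRate α β / growthRate α β ↔ α < 1 := by
  rw [lt_div_iff₀ (growthRate_pos hα0 hα1 hβ0), ← sqrt_discr_lt_iff hα0 hα1 hβ0 hβ1]
  constructor <;> intro h <;>
    linarith [four_mul_starGrowthRate_sub_two_mul_growthRate α β]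

end

end ApollonianGrowth

open ApollonianGrowth in
/-- Main conclusion of Section 5: with `λ` the growth rate of the whole
complex and `λ* = 1 + 2α(1−β) + 2β` the growth rate of the star of a vertex
of weight 1, we have `λ > 0` and `λ*/λ ≥ 1/2`, with strict inequality iff
`α < 1` (and equality exactly when `α = 1`). -/
theorem ratio_lambda_star_lambda (α β : ℝ) (hα0 : 0 < α) (hα1 : α ≤ 1)
    (hβ0 : 0 < β) (hβ1 : β < 1) :
    let D : ℝ := 16*α^2 - 8*α + 1 + α^2*β^2 - 2*α*β^2 + β^2 + 14*β + 2*α*β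
      - 16*α^2*β
    let lam : ℝ := (8*α + 7*β*(1-α) + 1 + Real.sqrt D) / 2
    let lamStar : ℝ := 1 + 2*α*(1-β) + 2*β
    0 < lam ∧ 1/2 ≤ lamStar / lam ∧
    (1/2 < lamStar / lam ↔ α < 1) ∧
    (lamStar / lam = 1/2 ↔ α = 1) := by
  change 0 < growthRate α β ∧ 1/2 ≤ starGrowthRate α β / growthRate α β ∧
    (1/2 < starGrowthRate α β / growthRate α β ↔ α < 1) ∧
    (starGrowthRate α β / growthRate α β = 1/2 ↔ α = 1)
  have hle := half_le_starGrowthRate_div hα0.le hα1 hβ0.le hβ1.le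
  have hlt := half_lt_starGrowthRate_div_iff hα0.le hα1 hβ0.le hβ1
  refine ⟨growthRate_pos hα0.le hα1 hβ0.le, hle, hlt, ?_⟩
  rw [eq_comm, ← hle.not_lt_iff_eq, hlt, not_lt]
  exact ⟨hα1.antisymm, ge_of_eq⟩
end
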